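/- Let w : [0,T] → ℝ^d solve the gradient flow w'(t) = -∇L(w(t)) with L(w) = ∑_{i=1}^m ℓ(y_i, f(w,x_i)) as above. Then for any query x, f(w(T), x) = f(w(0), x) - ∑_{i=1}^m ∫_0^T ℓ'(y_i, f(w(t), x_i)) · K_{w(t)}(x, x_i) dt, where K_v is the tangent kernel of f at parameter v. In particular the learned model equals the initial model plus a sum over training examples of loss-weighted path-kernel terms. -/

import Mathlib

/-!
Along the flow, the chain rule gives `d/dt f(w t, x) = -⟪∇_w f(w t, x), ∇L(w t)⟫`, and
`∇L = ∑ᵢ ℓ'(yᵢ, f(·, xᵢ)) ∇_w f(·, xᵢ)`; so the time derivative of the prediction at `x` is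
`-∑ᵢ ℓ'(yᵢ, f(w t, xᵢ)) K_{w t}(x, xᵢ)`. These integrands are continuous in `t` because `f` is `C¹`
and `ℓ'` is continuous, so the fundamental theorem of calculus on `[0, T]` gives the formula.
-/

open scoped BigOperators Gradient RealInnerProductSpace
open InnerProductSpace

section GradientCalculus

variable {E : Type*} [NormedAddCommGroup E] [InnerProductSpace ℝ E] [CompleteSpace E]

theorem HasDerivAt.comp_hasGradientAt {φ : ℝ → ℝ} {φ' : ℝ} {g : E → ℝ} {G v : E}
    (hφ : HasDerivAt φ φ' (g v)) (hg : HasGradientAt g G v) :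
    HasGradientAt (fun u => φ (g u)) (φ' • G) v := by
  rw [hasGradientAt_iff_hasFDerivAt, map_smul]
  exact hφ.comp_hasFDerivAt v hg.hasFDerivAt

theorem HasGradientAt.fun_sum {ι : Type*} {s : Finset ι} {g : ι → E → ℝ} {G : ι → E} {v : E}
    (h : ∀ i ∈ s, HasGradientAt (g i) (G i) v) :
    HasGradientAt (fun u => ∑ i ∈ s, g i u) (∑ i ∈ s, G i) v := by
  rw [hasGradientAt_iff_hasFDerivAt, map_sum]
  exact HasFDerivAt.fun_sum fun i hi => (h i hi).hasFDerivAt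

theorem HasGradientAt.comp_hasDerivAt {g : E → ℝ} {G : E} {w : ℝ → E} {w' : E} {t : ℝ}
    (hg : HasGradientAt g G (w t)) (hw : HasDerivAt w w' t) :
    HasDerivAt (fun s => g (w s)) ⟪G, w'⟫ t :=
  hg.hasFDerivAt.comp_hasDerivAt t hw

theorem ContDiff.continuous_gradient {g : E → ℝ} (hg : ContDiff ℝ 1 g) : Continuous (∇ g) :=
  (toDual ℝ E).symm.continuous.comp (hg.continuous_fderiv one_ne_zero)

theorem integral_inner_gradient_eq_sub {g : E → ℝ} (hg : Differentiable ℝ g) {w w' : ℝ → E}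
    {a b : ℝ} (hw : ∀ t ∈ Set.uIcc a b, HasDerivAt w (w' t) t)
    (hint : IntervalIntegrable (fun t => ⟪∇ g (w t), w' t⟫) MeasureTheory.volume a b) :
    ∫ t in a..b, ⟪∇ g (w t), w' t⟫ = g (w b) - g (w a) :=
  intervalIntegral.integral_eq_sub_of_hasDerivAt
    (fun t ht => (hg (w t)).hasGradientAt.comp_hasDerivAt (hw t ht)) hint

end GradientCalculus

theorem path_kernel_representation (d n m : ℕ)
    (f : EuclideanSpace ℝ (Fin d) → EuclideanSpace ℝ (Fin n) → ℝ)
    (hf : ∀ x, ContDiff ℝ 1 (fun w => f w x))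
    (ℓ ℓ' : ℝ → ℝ → ℝ)
    (hℓ : ∀ a b, HasDerivAt (fun y => ℓ a y) (ℓ' a b) b)
    (hℓ' : ∀ a, Continuous (ℓ' a))
    (x : Fin m → EuclideanSpace ℝ (Fin n)) (y : Fin m → ℝ)
    (L : EuclideanSpace ℝ (Fin d) → ℝ)
    (hL : L = fun v => ∑ i, ℓ (y i) (f v (x i)))
    (T : ℝ) (hT : 0 ≤ T)
    (w : ℝ → EuclideanSpace ℝ (Fin d))
    (hw : ∀ t ∈ Set.Icc (0 : ℝ) T, HasDerivAt w (-(gradient L (w t))) t)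
    (xq : EuclideanSpace ℝ (Fin n)) :
    f (w T) xq = f (w 0) xq -
      ∑ i, ∫ t in (0 : ℝ)..T, ℓ' (y i) (f (w t) (x i)) *
        (inner ℝ (gradient (fun v => f v xq) (w t))
               (gradient (fun v => f v (x i)) (w t)) : ℝ) := by
  rw [← Set.uIcc_of_le hT] at hw
  have hgradL (v) : ∇ L v = ∑ i, ℓ' (y i) (f v (x i)) • ∇ (fun u => f u (x i)) v := by
    subst hL
    exact (HasGradientAt.fun_sum fun i _ => (hℓ _ _).comp_hasGradientAt
      ((hf (x i)).differentiable one_ne_zero v).hasGradientAt).gradient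
  have hflow : (fun t => ⟪∇ (fun v => f v xq) (w t), -∇ L (w t)⟫) = fun t =>
      -∑ i, ℓ' (y i) (f (w t) (x i)) * ⟪∇ (fun v => f v xq) (w t), ∇ (fun v => f v (x i)) (w t)⟫ := by
    funext t
    simp only [hgradL, inner_neg_right, inner_sum, real_inner_smul_right]
  have hwc : ContinuousOn w (Set.uIcc 0 T) := fun t ht => (hw t ht).continuousAt.continuousWithinAt
  have hint (i : Fin m) : IntervalIntegrable (fun t => ℓ' (y i) (f (w t) (x i)) *
      ⟪∇ (fun v => f v xq) (w t), ∇ (fun v => f v (x i)) (w t)⟫) MeasureTheory.volume 0 T :=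
    ((((hℓ' _).comp (hf (x i)).continuous).mul ((hf xq).continuous_gradient.inner
      (hf (x i)).continuous_gradient)).comp_continuousOn hwc).intervalIntegrable
  have key := integral_inner_gradient_eq_sub ((hf xq).differentiable one_ne_zero) hw
    (by simpa only [hflow, Finset.sum_fn, Pi.neg_def] using (IntervalIntegrable.sum Finset.univ fun i _ => hint i).neg)
  rw [hflow, intervalIntegral.integral_neg, intervalIntegral.integral_finsetSum fun i _ => hint i] at key
  linarith
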